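/- arXiv:1801.04315 — 8 statements merged into one kernel-verified Lean document; each statement's English description precedes it below -/
import Mathlib

section
/- If a marked Petri net is lucent (no two distinct reachable markings enable the same set of transitions), then it is bounded. -/
open scoped Classical

/-- A Petri net over places `P` and transitions `T`, given by the pre-set and
post-set of each transition (encoding the flow relation `F`). -/
structure PetriNet (P T : Type) where
  pre : T → Set P
  post : T → Set P

namespace PetriNet

variable {P T : Type}

/-- Transition `t` is enabled at marking `M`. -/
def enabled (N : PetriNet P T) (M : P → ℕ) (t : T) : Prop :=
  ∀ p ∈ N.pre t, 1 ≤ M p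

/-- The marking obtained by firing `t` at `M`. -/
noncomputable def fire (N : PetriNet P T) (M : P → ℕ) (t : T) : P → ℕ :=
  fun p => M p - (if p ∈ N.pre t then 1 else 0) + (if p ∈ N.post t then 1 else 0)

/-- `Fires N M σ M'`: the firing sequence `σ` is executable at `M` and leads to `M'`. -/
inductive Fires (N : PetriNet P T) : (P → ℕ) → List T → (P → ℕ) → Prop
  | nil (M : P → ℕ) : Fires N M [] M
  | cons {M M'' : P → ℕ} {t : T} {σ : List T} :
      N.enabled M t → Fires N (N.fire M t) σ M'' → Fires N M (t :: σ) M''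

/-- `M'` is reachable from `M` in `N`. -/
def Reach (N : PetriNet P T) (M M' : P → ℕ) : Prop := ∃ σ, Fires N M σ M'

/-- The set of transitions enabled at `M`. -/
def enabledSet (N : PetriNet P T) (M : P → ℕ) : Set T := {t | N.enabled M t}

/-- `(N,M)` is lucent: distinct reachable markings enable distinct transition sets. -/
def Lucent (N : PetriNet P T) (M : P → ℕ) : Prop :=
  ∀ M1 M2, Reach N M M1 → Reach N M M2 →
    enabledSet N M1 = enabledSet N M2 → M1 = M2

/-- `(N,M)` is bounded. -/
def Bounded (N : PetriNet P T) (M : P → ℕ) : Prop :=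
  ∃ k, ∀ M', Reach N M M' → ∀ p, M' p ≤ k

/-- `(N,M)` is live. -/
def Live (N : PetriNet P T) (M : P → ℕ) : Prop :=
  ∀ M', Reach N M M' → ∀ t, ∃ M'', Reach N M' M'' ∧ N.enabled M'' t

/-- `MH` is a home marking of `(N,M)`. -/
def HomeMarking (N : PetriNet P T) (M MH : P → ℕ) : Prop :=
  ∀ M', Reach N M M' → Reach N M' MH

/-- A net is well-formed if some marking makes it live and bounded. -/
def WellFormed (N : PetriNet P T) : Prop := ∃ M, Live N M ∧ Bounded N M

/-- `N` is a free-choice net. -/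
def FreeChoice (N : PetriNet P T) : Prop :=
  ∀ t1 t2 : T, N.pre t1 = N.pre t2 ∨ N.pre t1 ∩ N.pre t2 = ∅

/-- A set of nodes is cluster-closed: with a place it contains all its output
transitions, and with a transition all its input places. -/
def ClusterClosed (N : PetriNet P T) (X : Set (P ⊕ T)) : Prop :=
  (∀ p, Sum.inl p ∈ X → ∀ t, p ∈ N.pre t → Sum.inr t ∈ X) ∧
  (∀ t, Sum.inr t ∈ X → ∀ p, p ∈ N.pre t → Sum.inl p ∈ X)

/-- The cluster of a node `x`: the smallest cluster-closed set containing `x`. -/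
def cluster (N : PetriNet P T) (x : P ⊕ T) : Set (P ⊕ T) :=
  ⋂₀ {X | x ∈ X ∧ ClusterClosed N X}

/-- The set of clusters of `N`. -/
def clusters (N : PetriNet P T) : Set (Set (P ⊕ T)) :=
  {C | ∃ x, C = cluster N x}

/-- `C` is a cluster of `N`. -/
def IsCluster (N : PetriNet P T) (C : Set (P ⊕ T)) : Prop := ∃ x, C = cluster N x

/-- The transitions of a set of nodes. -/
def transOf (C : Set (P ⊕ T)) : Set T := {t | Sum.inr t ∈ C}

/-- `M(C)`: one token on each place of `C`. -/
noncomputable def clusterMarking (C : Set (P ⊕ T)) : P → ℕ :=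
  fun p => if Sum.inl p ∈ C then 1 else 0

/-- `C` is a home cluster of `(N,M)`. -/
def HomeCluster (N : PetriNet P T) (M : P → ℕ) (C : Set (P ⊕ T)) : Prop :=
  IsCluster N C ∧ HomeMarking N M (clusterMarking C)

/-- `(N,M)` is perpetual: live, bounded, with a home cluster. -/
def Perpetual (N : PetriNet P T) (M : P → ℕ) : Prop :=
  Live N M ∧ Bounded N M ∧ ∃ C, HomeCluster N M C

/-- `•R`: transitions with an output place in `R`. -/
def preT (N : PetriNet P T) (R : Set P) : Set T := {t | ∃ p ∈ R, p ∈ N.post t}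

/-- `R•`: transitions with an input place in `R`. -/
def postT (N : PetriNet P T) (R : Set P) : Set T := {t | ∃ p ∈ R, p ∈ N.pre t}

/-- `R` is a siphon. -/
def Siphon (N : PetriNet P T) (R : Set P) : Prop := preT N R ⊆ postT N R

/-- `R` is a trap. -/
def Trap (N : PetriNet P T) (R : Set P) : Prop := postT N R ⊆ preT N R

/-- The arcs of `N` restricted to the node set `X`. -/
def subnetEdge (N : PetriNet P T) (X : Set (P ⊕ T)) : (P ⊕ T) → (P ⊕ T) → Prop :=
  fun a b => a ∈ X ∧ b ∈ X ∧
    ((∃ p t, a = Sum.inl p ∧ b = Sum.inr t ∧ p ∈ N.pre t) ∨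
     (∃ t p, a = Sum.inr t ∧ b = Sum.inl p ∧ p ∈ N.post t))

/-- `X` is (the node set of) a P-component of `N`: closed under neighbors of its
places, every transition has exactly one input and one output place inside it,
and its subnet is strongly connected. -/
def PComponent (N : PetriNet P T) (X : Set (P ⊕ T)) : Prop :=
  X.Nonempty ∧
  (∀ p, Sum.inl p ∈ X → ∀ t, (p ∈ N.pre t ∨ p ∈ N.post t) → Sum.inr t ∈ X) ∧
  (∀ t, Sum.inr t ∈ X →
    (∃! p, p ∈ N.pre t ∧ Sum.inl p ∈ X) ∧ (∃! p, p ∈ N.post t ∧ Sum.inl p ∈ X)) ∧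
  (∀ a ∈ X, ∀ b ∈ X, Relation.ReflTransGen (subnetEdge N X) a b)

/-- `N` has a P-cover. -/
def PCover (N : PetriNet P T) : Prop :=
  ∀ x : P ⊕ T, ∃ X, PComponent N X ∧ x ∈ X

/-- Total number of tokens of `M` on the places of `X`. -/
noncomputable def tokenCount [Fintype P] (X : Set (P ⊕ T)) (M : P → ℕ) : ℕ :=
  ∑ p : P, if Sum.inl p ∈ X then M p else 0

/-- `(N,M)` is locally safe: every P-component carries at most one token in
every reachable marking. -/
def LocallySafe [Fintype P] (N : PetriNet P T) (M : P → ℕ) : Prop :=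
  ∀ X, PComponent N X → ∀ M', Reach N M M' → tokenCount X M' ≤ 1

/-- The subnet of `N` generated by the node set `U`. -/
def restrict (N : PetriNet P T) (U : Set (P ⊕ T)) :
    PetriNet {p // Sum.inl p ∈ U} {t // Sum.inr t ∈ U} where
  pre t := {p | p.1 ∈ N.pre t.1}
  post t := {p | p.1 ∈ N.post t.1}

/-- Inclusion of the nodes of the subnet generated by `U` into the nodes of `N`. -/
def mapNode (U : Set (P ⊕ T)) :
    ({p // Sum.inl p ∈ U} ⊕ {t // Sum.inr t ∈ U}) → (P ⊕ T)
  | .inl p => .inl p.1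
  | .inr t => .inr t.1

/-- The flow relation of `N` as an edge relation on nodes. -/
def flowEdge (N : PetriNet P T) : (P ⊕ T) → (P ⊕ T) → Prop
  | .inl p, .inr t => p ∈ N.pre t
  | .inr t, .inl p => p ∈ N.post t
  | _, _ => False

/-- `N` is a workflow net with source `i` and sink `o`. -/
def IsWorkflowNet (N : PetriNet P T) (i o : P) : Prop :=
  (∀ t, i ∉ N.post t) ∧ (∀ t, o ∉ N.pre t) ∧
  (∀ x : P ⊕ T, Relation.ReflTransGen (flowEdge N) (Sum.inl i) x ∧
    Relation.ReflTransGen (flowEdge N) x (Sum.inl o))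

/-- The short-circuited net: a fresh transition `t*` from `o` to `i`. -/
def shortCircuit (N : PetriNet P T) (i o : P) : PetriNet P (T ⊕ Unit) where
  pre t := match t with | .inl t => N.pre t | .inr _ => {o}
  post t := match t with | .inl t => N.post t | .inr _ => {i}

/-- The marking `[p]` with a single token on `p`. -/
noncomputable def unitMarking (p : P) : P → ℕ := fun q => if q = p then 1 else 0

/-- A workflow net is sound iff its short-circuited net marked with `[i]`
is live and bounded. -/
def Sound (N : PetriNet P T) (i o : P) : Prop :=
  Live (shortCircuit N i o) (unitMarking i) ∧ Bounded (shortCircuit N i o) (unitMarking i)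

/-- `AltPath N p0 [(t1,p1),...,(tn,pn)]` encodes the path `⟨p0,t1,p1,...,tn,pn⟩`
in `N`, alternating between places and transitions along the flow relation. -/
inductive AltPath (N : PetriNet P T) : P → List (T × P) → Prop
  | nil (p : P) : AltPath N p []
  | cons {p q : P} {t : T} {l : List (T × P)} :
      p ∈ N.pre t → q ∈ N.post t → AltPath N q l → AltPath N p ((t, q) :: l)

end PetriNet

open PetriNet

/-- If a marked Petri net is lucent, then it is bounded. -/
theorem lucent_implies_bounded {P T : Type} [Fintype P] [Fintype T]
    (N : PetriNet P T) (M : P → ℕ) (h : Lucent N M) : Bounded N M := by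
  have hS : {M' | Reach N M M'}.Finite := by
    apply Set.Finite.of_finite_image (f := enabledSet N) (Set.toFinite _)
    intro a ha b hb hab
    exact h a b ha hb hab
  obtain ⟨k, hk⟩ := (hS.image (fun M' => Finset.univ.sup M')).bddAbove
  refine ⟨k, fun M' hr p => ?_⟩
  have hle : Finset.univ.sup M' ≤ k := hk ⟨M', hr, rfl⟩
  exact le_trans (Finset.le_sup (Finset.mem_univ p)) hle
end

section
/- In any reachable marking of a marked Petri net, the total number of tokens on the places of a P-component equals the number of tokens the initial marking assigns to those places (i.e., the token count of a P-component is invariant under firing). -/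
open scoped Classical

open PetriNet

lemma sum_indicator_unique {P : Type} [Fintype P] (c : P → Prop) [DecidablePred c]
    (h : ∃! p, c p) : (∑ p : P, if c p then 1 else 0) = 1 := by
  obtain ⟨p0, hp0, huniq⟩ := h
  have hf : Finset.univ.filter c = {p0} := by
    ext q
    simp only [Finset.mem_filter, Finset.mem_univ, true_and, Finset.mem_singleton]
    exact ⟨fun hq => huniq q hq, fun hq => hq ▸ hp0⟩
  rw [Finset.sum_ite, Finset.sum_const, Finset.sum_const, hf]
  simp

lemma token_fire_invariant {P T : Type} [Fintype P]
    (N : PetriNet P T) (X : Set (P ⊕ T)) (hX : PComponent N X)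
    (M : P → ℕ) (t : T) (hen : N.enabled M t) :
    tokenCount X (N.fire M t) = tokenCount X M := by
  classical
  obtain ⟨-, hclosed, huniq, -⟩ := hX
  set a : P → ℕ := fun p => if Sum.inl p ∈ X ∧ p ∈ N.pre t then 1 else 0 with ha
  set b : P → ℕ := fun p => if Sum.inl p ∈ X ∧ p ∈ N.post t then 1 else 0 with hb
  have hterm : ∀ p : P, (if Sum.inl p ∈ X then N.fire M t p else 0)
      = ((if Sum.inl p ∈ X then M p else 0) - a p) + b p := by
    intro p
    simp only [ha, hb, PetriNet.fire]
    by_cases hpX : Sum.inl p ∈ X <;> by_cases hpre : p ∈ N.pre t <;>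
      by_cases hpost : p ∈ N.post t <;> simp [hpX, hpre, hpost]
  have hab : (∑ p : P, a p) = ∑ p : P, b p := by
    by_cases htX : Sum.inr t ∈ X
    · obtain ⟨h1, h2⟩ := huniq t htX
      have e1 : (∑ p : P, a p) = 1 := by
        apply sum_indicator_unique
        obtain ⟨p0, hp0, hu⟩ := h1
        exact ⟨p0, ⟨hp0.2, hp0.1⟩, fun q hq => hu q ⟨hq.2, hq.1⟩⟩
      have e2 : (∑ p : P, b p) = 1 := by
        apply sum_indicator_unique
        obtain ⟨p0, hp0, hu⟩ := h2
        exact ⟨p0, ⟨hp0.2, hp0.1⟩, fun q hq => hu q ⟨hq.2, hq.1⟩⟩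
      rw [e1, e2]
    · have e1 : (∑ p : P, a p) = 0 := by
        apply Finset.sum_eq_zero; intro p _
        simp only [ha, ite_eq_right_iff]
        rintro ⟨hpX, hpre⟩
        exact absurd (hclosed p hpX t (Or.inl hpre)) htX
      have e2 : (∑ p : P, b p) = 0 := by
        apply Finset.sum_eq_zero; intro p _
        simp only [hb, ite_eq_right_iff]
        rintro ⟨hpX, hpost⟩
        exact absurd (hclosed p hpX t (Or.inr hpost)) htX
      rw [e1, e2]
  have hle : ∀ p : P, a p ≤ (if Sum.inl p ∈ X then M p else 0) := by
    intro p
    simp only [ha]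
    by_cases hpX : Sum.inl p ∈ X <;> by_cases hpre : p ∈ N.pre t <;>
      simp [hpX, hpre]
    exact hen p hpre
  have hleS : (∑ p : P, a p) ≤ ∑ p : P, (if Sum.inl p ∈ X then M p else 0) :=
    Finset.sum_le_sum fun p _ => hle p
  unfold tokenCount
  calc (∑ p : P, if Sum.inl p ∈ X then N.fire M t p else 0)
      = ∑ p : P, (((if Sum.inl p ∈ X then M p else 0) - a p) + b p) := by
        exact Finset.sum_congr rfl fun p _ => hterm p
    _ = (∑ p : P, ((if Sum.inl p ∈ X then M p else 0) - a p)) + ∑ p : P, b p := by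
        rw [Finset.sum_add_distrib]
    _ = ((∑ p : P, (if Sum.inl p ∈ X then M p else 0)) - ∑ p : P, a p) + ∑ p : P, b p := by
        rw [Finset.sum_tsub_distrib Finset.univ (fun p _ => hle p)]
    _ = ∑ p : P, (if Sum.inl p ∈ X then M p else 0) := by
        rw [← hab, Nat.sub_add_cancel hleS]

/-- The token count of a P-component is invariant under firing. -/
theorem pComponent_token_invariant {P T : Type} [Fintype P] [Fintype T]
    (N : PetriNet P T) (X : Set (P ⊕ T)) (hX : PComponent N X)
    (M M' : P → ℕ) (hreach : Reach N M M') :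
    tokenCount X M' = tokenCount X M := by
  obtain ⟨σ, hσ⟩ := hreach
  induction hσ with
  | nil M => rfl
  | cons hen hrest ih => rw [ih, token_fire_invariant N X hX _ _ hen]
end

section
/- If a workflow net N is sound, then its short-circuited marked net (N̄, [i]) is perpetual: it is live, bounded, and the cluster of the source place i is a home cluster. -/
open scoped Classical

open PetriNet

namespace PetriNet

theorem Fires.append' {P T : Type} {N : PetriNet P T} {M M' M'' : P → ℕ} {σ τ : List T}
    (h : Fires N M σ M') (h' : Fires N M' τ M'') : Fires N M (σ ++ τ) M'' := by
  induction h with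
  | nil => simpa using h'
  | cons he _ ih => exact .cons he (ih h')

theorem Fires.add' {P T : Type} {N : PetriNet P T} {M M' : P → ℕ} {σ : List T}
    (h : Fires N M σ M') (K : P → ℕ) :
    Fires N (fun p => M p + K p) σ (fun p => M' p + K p) := by
  induction h with
  | nil => exact .nil _
  | @cons M1 M2 t σ' he hf ih =>
    refine .cons (fun p hp => by have := he p hp; omega) ?_
    have hEq : N.fire (fun p => M1 p + K p) t = fun p => N.fire M1 t p + K p := by
      funext p
      have ha : (if p ∈ N.pre t then 1 else 0) ≤ M1 p := by
        split
        · exact he p ‹_›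
        · exact Nat.zero_le _
      simp only [fire]
      omega
    rwa [hEq]

end PetriNet

/-- If a workflow net is sound, then its short-circuited marked net
is perpetual: live, bounded, and the cluster of the source place is a home cluster. -/
theorem sound_workflow_shortCircuit_perpetual {P T : Type} [Fintype P] [Fintype T]
    (N : PetriNet P T) (i o : P) (hwf : IsWorkflowNet N i o) (hsound : Sound N i o) :
    Live (shortCircuit N i o) (unitMarking i) ∧
    Bounded (shortCircuit N i o) (unitMarking i) ∧
    HomeCluster (shortCircuit N i o) (unitMarking i)
      (cluster (shortCircuit N i o) (Sum.inl i)) := by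
  obtain ⟨hlive, hbdd⟩ := hsound
  refine ⟨hlive, hbdd, ?_⟩
  set NB := shortCircuit N i o with hNBdef
  set M0 := unitMarking (P := P) i with hM0def
  have reach_trans : ∀ {A B C : P → ℕ}, Reach NB A B → Reach NB B C → Reach NB A C := by
    rintro A B C ⟨σ, h1⟩ ⟨τ, h2⟩
    exact ⟨σ ++ τ, h1.append' h2⟩
  -- Claim A : any reachable marking putting a token on `i` is exactly `[i]`.
  have claimA : ∀ M, Reach NB M0 M → 1 ≤ M i → M = M0 := by
    intro M hM hMi
    by_contra hne
    obtain ⟨k, hk⟩ := hbdd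
    obtain ⟨σ, hσ⟩ := hM
    have hge : ∀ p, M0 p ≤ M p := by
      intro p
      by_cases hp : p = i
      · subst hp; simpa [hM0def, unitMarking] using hMi
      · simp [hM0def, unitMarking, hp]
    obtain ⟨q, hq⟩ : ∃ q, M0 q < M q := by
      by_contra h
      push_neg at h
      exact hne (funext fun p => le_antisymm (h p) (hge p))
    set K : P → ℕ := fun p => M p - M0 p with hK
    have hMK : ∀ p, M p = M0 p + K p := fun p => by have := hge p; simp only [hK]; omega
    have hiter : ∀ n : ℕ, Reach NB M0 (fun p => M0 p + n * K p) := by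
      intro n
      induction n with
      | zero =>
        refine ⟨[], ?_⟩
        have : (fun p => M0 p + 0 * K p) = M0 := funext fun p => by omega
        rw [this]; exact .nil _
      | succ n ih =>
        obtain ⟨τ, hτ⟩ := ih
        have h2 := hσ.add' (fun p => n * K p)
        refine ⟨τ ++ σ, ?_⟩
        have h3 := hτ.append' h2
        have hEq : (fun p => M p + n * K p) = fun p => M0 p + (n + 1) * K p := by
          funext p
          rw [hMK p]
          ring
        rwa [hEq] at h3
    have hb := hk _ (hiter (k + 1)) q
    have hKq : 1 ≤ K q := by simp only [hK]; omega
    have : k + 1 ≤ (k + 1) * K q := Nat.le_mul_of_pos_right _ hKq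
    omega
  -- Claim B : `[i]` is a home marking.
  have claimB : HomeMarking NB M0 M0 := by
    intro M' hM'
    obtain ⟨M'', hr, hen⟩ := hlive M' hM' (Sum.inr ())
    have ho : 1 ≤ M'' o := hen o (by simp [hNBdef, shortCircuit])
    have hstep : Fires NB M'' [Sum.inr ()] (NB.fire M'' (Sum.inr ())) := .cons hen (.nil _)
    have hreach : Reach NB M0 (NB.fire M'' (Sum.inr ())) :=
      reach_trans (reach_trans hM' hr) ⟨_, hstep⟩
    have hfi : 1 ≤ NB.fire M'' (Sum.inr ()) i := by
      simp only [hNBdef, shortCircuit, fire, Set.mem_singleton_iff]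
      by_cases hio : i = o
      · subst hio; simp
      · simp [hio]
    have hfin := claimA _ hreach hfi
    exact reach_trans hr ⟨_, hfin ▸ hstep⟩
  -- Claim C : transitions consuming from `i` consume only from `i`.
  have claimC : ∀ t : T ⊕ Unit, i ∈ NB.pre t → ∀ p, p ∈ NB.pre t → p = i := by
    intro t hit p hpt
    obtain ⟨M'', hr, hen⟩ := hlive M0 ⟨[], .nil _⟩ t
    have h1 : 1 ≤ M'' i := hen i hit
    have hM'' := claimA M'' hr h1
    have hp := hen p hpt
    rw [hM''] at hp
    by_contra hne
    simp [hM0def, unitMarking, hne] at hp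
  -- The cluster of `i`.
  set S : Set (P ⊕ (T ⊕ Unit)) :=
    {x | x = Sum.inl i ∨ ∃ t, x = Sum.inr t ∧ i ∈ NB.pre t} with hS
  have hSc : ClusterClosed NB S := by
    constructor
    · intro p hp t hpt
      rcases hp with hp | ⟨t', ht', _⟩
      · have : p = i := by injection hp
        subst this
        exact Or.inr ⟨t, rfl, hpt⟩
      · exact absurd ht' (by simp)
    · intro t ht p hpt
      rcases ht with ht | ⟨t', ht', hit'⟩
      · exact absurd ht (by simp)
      · have : t = t' := by injection ht'
        subst this
        exact Or.inl (by rw [claimC t hit' p hpt])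
  have hcl : cluster NB (Sum.inl i) = S := by
    apply subset_antisymm
    · exact Set.sInter_subset_of_mem ⟨Or.inl rfl, hSc⟩
    · intro x hx
      intro X hX
      obtain ⟨hiX, hX1, hX2⟩ := hX
      rcases hx with hx | ⟨t, hx, hit⟩
      · subst hx; exact hiX
      · subst hx; exact hX1 i hiX t hit
  have hcm : clusterMarking (cluster NB (Sum.inl i)) = M0 := by
    funext p
    rw [hcl]
    by_cases hp : p = i
    · subst hp; simp [clusterMarking, hS, hM0def, unitMarking]
    · simp [clusterMarking, hS, hM0def, unitMarking, hp]
  exact ⟨⟨Sum.inl i, rfl⟩, hcm ▸ claimB⟩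
end

section
/- Every perpetual marked free-choice net is locally safe, i.e., every P-component carries exactly at most one token in every reachable marking. -/
open scoped Classical

open PetriNet

namespace PetriNet

variable {P T : Type}

lemma mem_cluster_self (N : PetriNet P T) (x : P ⊕ T) : x ∈ cluster N x := by
  intro S hS; exact hS.1

lemma cluster_clusterClosed (N : PetriNet P T) (x : P ⊕ T) :
    ClusterClosed N (cluster N x) := by
  constructor
  · intro p hp t ht S hS
    exact hS.2.1 p (hp S hS) t ht
  · intro t ht p hp S hS
    exact hS.2.2 t (ht S hS) p hp

lemma cluster_subset {N : PetriNet P T} {x : P ⊕ T} {S : Set (P ⊕ T)}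
    (hx : x ∈ S) (hS : ClusterClosed N S) : cluster N x ⊆ S :=
  Set.sInter_subset_of_mem ⟨hx, hS⟩

lemma cluster_symm {N : PetriNet P T} {x y : P ⊕ T} (h : y ∈ cluster N x) :
    x ∈ cluster N y := by
  have hZ : cluster N x ⊆ {z | z ∈ cluster N x ∧ x ∈ cluster N z} := by
    refine cluster_subset ⟨mem_cluster_self N x, mem_cluster_self N x⟩ ⟨?_, ?_⟩
    · intro p hp t ht
      refine ⟨(cluster_clusterClosed N x).1 p hp.1 t ht, ?_⟩
      have hpt : Sum.inl p ∈ cluster N (Sum.inr t) :=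
        (cluster_clusterClosed N (Sum.inr t)).2 t (mem_cluster_self _ _) p ht
      exact cluster_subset hpt (cluster_clusterClosed N (Sum.inr t)) hp.2
    · intro t ht p hp
      refine ⟨(cluster_clusterClosed N x).2 t ht.1 p hp, ?_⟩
      have htp : Sum.inr t ∈ cluster N (Sum.inl p) :=
        (cluster_clusterClosed N (Sum.inl p)).1 p (mem_cluster_self _ _) t hp
      exact cluster_subset htp (cluster_clusterClosed N (Sum.inl p)) ht.2
  exact (hZ h).2

/-- In a free-choice net, every place of a cluster is an input place of every
transition of the cluster. -/
lemma place_mem_pre_of_cluster {N : PetriNet P T} (hfc : FreeChoice N)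
    {x : P ⊕ T} {t : T} {p : P} (ht : Sum.inr t ∈ cluster N x)
    (hp : Sum.inl p ∈ cluster N x) : p ∈ N.pre t := by
  have hxt : x ∈ cluster N (Sum.inr t) := cluster_symm ht
  have hsub : cluster N x ⊆ cluster N (Sum.inr t) :=
    cluster_subset hxt (cluster_clusterClosed N (Sum.inr t))
  set Y : Set (P ⊕ T) := {z | match z with
    | Sum.inl q => q ∈ N.pre t
    | Sum.inr s => N.pre s = N.pre t} with hY
  have hYc : ClusterClosed N Y := by
    constructor
    · intro q hq s hs
      have hq' : q ∈ N.pre t := hq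
      show N.pre s = N.pre t
      rcases hfc s t with h | h
      · exact h
      · exfalso
        have : q ∈ N.pre s ∩ N.pre t := ⟨hs, hq'⟩
        rw [h] at this; exact this
    · intro s hs q hq
      have hs' : N.pre s = N.pre t := hs
      show q ∈ N.pre t
      rw [← hs']; exact hq
  have : cluster N (Sum.inr t) ⊆ Y := cluster_subset rfl hYc
  exact this (hsub hp)

lemma tokenCount_fire [Fintype P] {N : PetriNet P T} {X : Set (P ⊕ T)}
    {M : P → ℕ} {t : T} (hX : PComponent N X) (ht : N.enabled M t) :
    tokenCount X (N.fire M t) = tokenCount X M := by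
  by_cases htX : Sum.inr t ∈ X
  · obtain ⟨⟨pi, ⟨hpi_pre, hpi_X⟩, hpi_uniq⟩, ⟨po, ⟨hpo_post, hpo_X⟩, hpo_uniq⟩⟩ :=
      hX.2.2.1 t htX
    have key : ∀ p : P, (if Sum.inl p ∈ X then (N.fire M t p : ℤ) else 0)
        = (if Sum.inl p ∈ X then (M p : ℤ) else 0)
          - (if p = pi then 1 else 0) + (if p = po then 1 else 0) := by
      intro p
      by_cases hpX : Sum.inl p ∈ X
      · rw [if_pos hpX, if_pos hpX]
        unfold fire
        by_cases hpre : p ∈ N.pre t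
        · have hppi : p = pi := hpi_uniq p ⟨hpre, hpX⟩
          have hM : 1 ≤ M p := ht p hpre
          by_cases hpost : p ∈ N.post t
          · have hppo : p = po := hpo_uniq p ⟨hpost, hpX⟩
            rw [if_pos hpre, if_pos hpost, if_pos hppi, if_pos hppo]
            omega
          · have hppo : p ≠ po := fun h => hpost (h ▸ hpo_post)
            rw [if_pos hpre, if_neg hpost, if_pos hppi, if_neg hppo]
            omega
        · have hppi : p ≠ pi := fun h => hpre (h ▸ hpi_pre)
          by_cases hpost : p ∈ N.post t
          · have hppo : p = po := hpo_uniq p ⟨hpost, hpX⟩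
            rw [if_neg hpre, if_pos hpost, if_neg hppi, if_pos hppo]
            omega
          · have hppo : p ≠ po := fun h => hpost (h ▸ hpo_post)
            rw [if_neg hpre, if_neg hpost, if_neg hppi, if_neg hppo]
            omega
      · have hppi : p ≠ pi := fun h => hpX (h ▸ hpi_X)
        have hppo : p ≠ po := fun h => hpX (h ▸ hpo_X)
        rw [if_neg hpX, if_neg hpX, if_neg hppi, if_neg hppo]
        ring
    have : (tokenCount X (N.fire M t) : ℤ) = (tokenCount X M : ℤ) := by
      unfold tokenCount
      push_cast
      calc (∑ p : P, (if Sum.inl p ∈ X then (N.fire M t p : ℤ) else 0))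
          = ∑ p : P, ((if Sum.inl p ∈ X then (M p : ℤ) else 0)
              - (if p = pi then 1 else 0) + (if p = po then 1 else 0)) :=
            Finset.sum_congr rfl (fun p _ => key p)
        _ = (∑ p : P, (if Sum.inl p ∈ X then (M p : ℤ) else 0)) - 1 + 1 := by
            rw [Finset.sum_add_distrib, Finset.sum_sub_distrib]
            simp
        _ = ∑ p : P, (if Sum.inl p ∈ X then (M p : ℤ) else 0) := by ring
    exact_mod_cast this
  · unfold tokenCount
    apply Finset.sum_congr rfl
    intro p _
    by_cases hpX : Sum.inl p ∈ X
    · have hpre : p ∉ N.pre t := fun h => htX (hX.2.1 p hpX t (Or.inl h))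
      have hpost : p ∉ N.post t := fun h => htX (hX.2.1 p hpX t (Or.inr h))
      simp [hpX, fire, hpre, hpost]
    · simp [hpX]

lemma tokenCount_fires [Fintype P] {N : PetriNet P T} {X : Set (P ⊕ T)}
    (hX : PComponent N X) :
    ∀ {M : P → ℕ} {σ : List T} {M' : P → ℕ}, Fires N M σ M' →
      tokenCount X M' = tokenCount X M := by
  intro M σ M' h
  induction h with
  | nil => rfl
  | cons he _ ih => rw [ih, tokenCount_fire hX he]

end PetriNet

/-- Every perpetual marked free-choice net is locally safe. -/
theorem perpetual_freeChoice_locallySafe {P T : Type} [Fintype P] [Fintype T]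
    (N : PetriNet P T) (M : P → ℕ) (hfc : FreeChoice N) (hperp : Perpetual N M) :
    LocallySafe N M := by
  obtain ⟨hlive, hbdd, C, ⟨x, rfl⟩, hhome⟩ := hperp
  intro X hX M' hM'
  obtain ⟨σ, hσ⟩ := hM'
  have h1 : tokenCount X M' = tokenCount X M := tokenCount_fires hX hσ
  obtain ⟨σ2, hσ2⟩ := hhome M ⟨[], Fires.nil M⟩
  have h2 : tokenCount X (clusterMarking (cluster N x)) = tokenCount X M :=
    tokenCount_fires hX hσ2
  rw [h1, ← h2]
  have hcard : tokenCount X (clusterMarking (cluster N x))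
      = (Finset.univ.filter
          (fun p => Sum.inl p ∈ X ∧ Sum.inl p ∈ cluster N x)).card := by
    rw [tokenCount, Finset.card_filter]
    apply Finset.sum_congr rfl
    intro p _
    by_cases h1 : Sum.inl p ∈ X <;> by_cases h2 : Sum.inl p ∈ cluster N x <;>
      simp [clusterMarking, h1, h2]
  rw [hcard, Finset.card_le_one]
  intro p1 hp1 p2 hp2
  rw [Finset.mem_filter] at hp1 hp2
  obtain ⟨-, hp1X, hp1C⟩ := hp1
  obtain ⟨-, hp2X, hp2C⟩ := hp2
  by_contra hne
  -- strong connectivity gives an outgoing edge from p1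
  have hpath := hX.2.2.2 (Sum.inl p1) hp1X (Sum.inl p2) hp2X
  rcases hpath.cases_head with heq | ⟨c, hedge, -⟩
  · exact hne (Sum.inl.inj heq)
  · obtain ⟨-, -, hor⟩ := hedge
    rcases hor with ⟨p, t, hpe, -, hpre⟩ | ⟨t, p, hpe, -, -⟩
    · rw [← Sum.inl.inj hpe] at hpre
      -- t is in the cluster and in X
      have htC : Sum.inr t ∈ cluster N x :=
        (cluster_clusterClosed N x).1 p1 hp1C t hpre
      have hp2pre : p2 ∈ N.pre t := place_mem_pre_of_cluster hfc htC hp2C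
      have htX : Sum.inr t ∈ X := hX.2.1 p1 hp1X t (Or.inl hpre)
      obtain ⟨⟨pi, -, hpi_uniq⟩, -⟩ := hX.2.2.1 t htX
      exact hne ((hpi_uniq p1 ⟨hpre, hp1X⟩).trans (hpi_uniq p2 ⟨hp2pre, hp2X⟩).symm)
    · exact absurd hpe (by simp)
end

section
/- Let N be a P-coverable Petri net and Q a nonempty set of P-components of N. Then every P-component of the Q-projection N↾(∪Q) is a P-component of N, and Q consists of P-components of N↾(∪Q); in particular N↾(∪Q) has a P-cover. -/
open scoped Classical

open PetriNet

/-! The node set `U = ⋃₀ Q` is closed under neighbours of places, being a union of P-components,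
and the inclusion `mapNode U` of the nodes of `N↾U` into those of `N` is injective with range `U`
and preserves and reflects arcs. So a node set `Y` of `N↾U` is a P-component of `N↾U` iff its
image is a P-component of `N`: the one condition that looks outside the set, closure under
neighbours of places, transfers because `U` itself has it. -/

namespace PetriNet

variable {P T : Type}

def PlaceNeighborClosed (N : PetriNet P T) (U : Set (P ⊕ T)) : Prop :=
  ∀ p, Sum.inl p ∈ U → ∀ t, (p ∈ N.pre t ∨ p ∈ N.post t) → Sum.inr t ∈ U

lemma PComponent.placeNeighborClosed {N : PetriNet P T} {X : Set (P ⊕ T)}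
    (hX : PComponent N X) : PlaceNeighborClosed N X :=
  hX.2.1

lemma PlaceNeighborClosed.sUnion {N : PetriNet P T} {Q : Set (Set (P ⊕ T))}
    (hQ : ∀ X ∈ Q, PlaceNeighborClosed N X) : PlaceNeighborClosed N (⋃₀ Q) := by
  rintro p ⟨X, hXQ, hpX⟩ t ht
  exact ⟨X, hXQ, hQ X hXQ p hpX t ht⟩

lemma existsUnique_iff_existsUnique_subtype {α : Type} {R : α → Prop} {S : Set α}
    (hRS : ∀ a, R a → a ∈ S) : (∃! a, R a) ↔ ∃! a : S, R a := by
  constructor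
  · rintro ⟨a, ha, huniq⟩
    exact ⟨⟨a, hRS a ha⟩, ha, fun b hb => Subtype.ext (huniq b hb)⟩
  · rintro ⟨a, ha, huniq⟩
    exact ⟨a, ha, fun b hb => congrArg Subtype.val (huniq ⟨b, hRS b hb⟩ hb)⟩

section restrict

variable {N : PetriNet P T} {U : Set (P ⊕ T)}
  {Y : Set ({p // Sum.inl p ∈ U} ⊕ {t // Sum.inr t ∈ U})}

lemma mapNode_injective : Function.Injective (mapNode U) := by
  rintro (⟨p, hp⟩ | ⟨t, ht⟩) (⟨q, hq⟩ | ⟨s, hs⟩) h <;> cases h <;> rfl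

lemma range_mapNode : Set.range (mapNode U) = U := by
  ext (p | t)
  · exact ⟨by rintro ⟨(q | s), ⟨⟩⟩; exact q.2, fun h => ⟨.inl ⟨p, h⟩, rfl⟩⟩
  · exact ⟨by rintro ⟨(q | s), ⟨⟩⟩; exact s.2, fun h => ⟨.inr ⟨t, h⟩, rfl⟩⟩

lemma inl_mem_image_mapNode {p : P} :
    Sum.inl p ∈ mapNode U '' Y ↔ ∃ h, Sum.inl ⟨p, h⟩ ∈ Y := by
  constructor
  · rintro ⟨(q | s), hY, ⟨⟩⟩
    exact ⟨q.2, hY⟩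
  · rintro ⟨h, hY⟩
    exact ⟨_, hY, rfl⟩

lemma inr_mem_image_mapNode {t : T} :
    Sum.inr t ∈ mapNode U '' Y ↔ ∃ h, Sum.inr ⟨t, h⟩ ∈ Y := by
  constructor
  · rintro ⟨(q | s), hY, ⟨⟩⟩
    exact ⟨s.2, hY⟩
  · rintro ⟨h, hY⟩
    exact ⟨_, hY, rfl⟩

lemma existsUnique_mem_image_mapNode_iff (S : Set P) :
    (∃! p, p ∈ S ∧ Sum.inl p ∈ mapNode U '' Y) ↔
      ∃! p : {p // Sum.inl p ∈ U}, p.1 ∈ S ∧ Sum.inl p ∈ Y := by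
  rw [existsUnique_iff_existsUnique_subtype (S := {p | Sum.inl p ∈ U})
    fun p hp => inl_mem_image_mapNode.1 hp.2 |>.1]
  exact existsUnique_congr fun p =>
    and_congr_right fun _ => mapNode_injective.mem_set_image (a := Sum.inl p)

lemma subnetEdge_restrict_iff {a b} :
    subnetEdge (N.restrict U) Y a b ↔
      subnetEdge N (mapNode U '' Y) (mapNode U a) (mapNode U b) := by
  simp only [subnetEdge, mapNode_injective.mem_set_image]
  cases a <;> cases b <;> simp [mapNode, restrict]

lemma reflTransGen_subnetEdge_restrict_of_image {a b}
    (h : Relation.ReflTransGen (subnetEdge N (mapNode U '' Y)) (mapNode U a) (mapNode U b)) :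
    Relation.ReflTransGen (subnetEdge (N.restrict U) Y) a b := by
  generalize hb : mapNode U b = y at h
  induction h generalizing b with
  | refl => rw [mapNode_injective hb]
  | tail _ hcd ih =>
    obtain ⟨c, -, rfl⟩ := hcd.1
    subst hb
    exact (ih rfl).tail (subnetEdge_restrict_iff.2 hcd)

lemma PComponent.image_mapNode (hU : PlaceNeighborClosed N U)
    (hY : PComponent (N.restrict U) Y) : PComponent N (mapNode U '' Y) := by
  obtain ⟨hne, hclosed, htrans, hconn⟩ := hY
  refine ⟨hne.image _, ?_, ?_, ?_⟩
  · intro p hp t ht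
    obtain ⟨hpU, hpY⟩ := inl_mem_image_mapNode.1 hp
    exact inr_mem_image_mapNode.2 ⟨_, hclosed ⟨p, hpU⟩ hpY ⟨t, hU p hpU t ht⟩ ht⟩
  · intro t ht
    obtain ⟨htU, htY⟩ := inr_mem_image_mapNode.1 ht
    exact (htrans ⟨t, htU⟩ htY).imp
      (existsUnique_mem_image_mapNode_iff _).2 (existsUnique_mem_image_mapNode_iff _).2
  · rintro _ ⟨a, ha, rfl⟩ _ ⟨b, hb, rfl⟩
    exact (hconn a ha b hb).lift _ fun _ _ => subnetEdge_restrict_iff.1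

lemma PComponent.of_image_mapNode (hY : PComponent N (mapNode U '' Y)) :
    PComponent (N.restrict U) Y := by
  obtain ⟨hne, hclosed, htrans, hconn⟩ := hY
  refine ⟨Set.image_nonempty.1 hne, ?_, ?_, ?_⟩
  · intro p hp t ht
    exact mapNode_injective.mem_set_image.1 <|
      hclosed p.1 (mapNode_injective.mem_set_image.2 hp) t.1 ht
  · intro t ht
    exact (htrans t.1 (mapNode_injective.mem_set_image.2 ht)).imp
      (existsUnique_mem_image_mapNode_iff _).1 (existsUnique_mem_image_mapNode_iff _).1
  · intro a ha b hb
    exact reflTransGen_subnetEdge_restrict_of_image <|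
      hconn _ (mapNode_injective.mem_set_image.2 ha) _ (mapNode_injective.mem_set_image.2 hb)

lemma PComponent.preimage_mapNode {X : Set (P ⊕ T)} (hX : PComponent N X) (hXU : X ⊆ U) :
    PComponent (N.restrict U) (mapNode U ⁻¹' X) :=
  .of_image_mapNode <| by rwa [Set.image_preimage_eq_of_subset (range_mapNode ▸ hXU)]

end restrict

end PetriNet

theorem partial_pCover_projection_general {P T : Type}
    (N : PetriNet P T)
    (Q : Set (Set (P ⊕ T))) (hQ : ∀ X ∈ Q, PComponent N X) :
    (∀ Y, PComponent (N.restrict (⋃₀ Q)) Y → PComponent N (mapNode (⋃₀ Q) '' Y)) ∧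
    (∀ X ∈ Q, PComponent (N.restrict (⋃₀ Q)) (mapNode (⋃₀ Q) ⁻¹' X)) ∧
    PCover (N.restrict (⋃₀ Q)) := by
  have hU : PlaceNeighborClosed N (⋃₀ Q) :=
    .sUnion fun X hX => (hQ X hX).placeNeighborClosed
  have hQ_restrict : ∀ X ∈ Q, PComponent (N.restrict (⋃₀ Q)) (mapNode (⋃₀ Q) ⁻¹' X) :=
    fun X hX => (hQ X hX).preimage_mapNode (Set.subset_sUnion_of_mem hX)
  refine ⟨fun Y hY => hY.image_mapNode hU, hQ_restrict, fun a => ?_⟩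
  obtain ⟨X, hXQ, haX⟩ : mapNode (⋃₀ Q) a ∈ ⋃₀ Q := range_mapNode.subset ⟨a, rfl⟩
  exact ⟨_, hQ_restrict X hXQ, haX⟩

/-- Components of a Q-projection are components of the original net,
the members of Q remain components of the projection, and the projection has a P-cover. -/
theorem partial_pCover_projection {P T : Type} [Fintype P] [Fintype T]
    (N : PetriNet P T) (hcov : PCover N)
    (Q : Set (Set (P ⊕ T))) (hne : Q.Nonempty) (hQ : ∀ X ∈ Q, PComponent N X) :
    (∀ Y, PComponent (N.restrict (⋃₀ Q)) Y → PComponent N (mapNode (⋃₀ Q) '' Y)) ∧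
    (∀ X ∈ Q, PComponent (N.restrict (⋃₀ Q)) (mapNode (⋃₀ Q) ⁻¹' X)) ∧
    PCover (N.restrict (⋃₀ Q)) :=
  partial_pCover_projection_general N Q hQ
end

section
/- Let (N,M) be a marked Petri net, Q a nonempty set of P-components of N, and (N_Q, M_Q) the marked Q-projection. For every firing sequence σ executable in (N,M) leading to M', the projection of σ onto the transitions of N_Q is executable in (N_Q,M_Q) and leads to the marking M' restricted to the places of N_Q. -/
open scoped Classical

open PetriNet

namespace PetriNet

variable {P T : Type}

theorem enabled_restrict {N : PetriNet P T} {U : Set (P ⊕ T)} {M : P → ℕ}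
    {t : {t // Sum.inr t ∈ U}} (ht : N.enabled M t.1) :
    (N.restrict U).enabled (fun p => M p.1) t :=
  fun p hp => ht p.1 hp

theorem fire_apply_of_notMem_pre_post {N : PetriNet P T} {M : P → ℕ} {t : T} {p : P}
    (hpre : p ∉ N.pre t) (hpost : p ∉ N.post t) : N.fire M t p = M p := by
  simp [fire, hpre, hpost]

/-- A transition outside `U` touches no retained place, and one inside keeps all its arcs to
them. -/
theorem Fires.restrict {N : PetriNet P T} {U : Set (P ⊕ T)}
    (hU : ∀ p, Sum.inl p ∈ U → ∀ t, (p ∈ N.pre t ∨ p ∈ N.post t) → Sum.inr t ∈ U)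
    {M M' : P → ℕ} {σ : List T} (h : Fires N M σ M') :
    Fires (N.restrict U) (fun p => M p.1)
      (σ.filterMap fun t => if h : Sum.inr t ∈ U then some ⟨t, h⟩ else none)
      (fun p => M' p.1) := by
  induction h with
  | nil M => exact Fires.nil _
  | @cons M M'' t σ ht _ ih =>
    by_cases htU : Sum.inr t ∈ U
    · rw [List.filterMap_cons, dif_pos htU]
      exact Fires.cons (enabled_restrict (t := ⟨t, htU⟩) ht) ih
    · have hfire : (fun p : {p // Sum.inl p ∈ U} => N.fire M t p.1) = fun p => M p.1 := by
        funext p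
        exact fire_apply_of_notMem_pre_post (fun hp => htU (hU p.1 p.2 t (Or.inl hp)))
          (fun hp => htU (hU p.1 p.2 t (Or.inr hp)))
      rw [List.filterMap_cons, dif_neg htU]
      rwa [hfire] at ih

theorem inr_mem_sUnion_of_pComponent {N : PetriNet P T} {Q : Set (Set (P ⊕ T))}
    (hQ : ∀ X ∈ Q, PComponent N X) (p : P) (hp : Sum.inl p ∈ ⋃₀ Q) (t : T)
    (hpt : p ∈ N.pre t ∨ p ∈ N.post t) : Sum.inr t ∈ ⋃₀ Q := by
  obtain ⟨X, hXQ, hpX⟩ := hp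
  exact ⟨X, hXQ, (hQ X hXQ).2.1 p hpX t hpt⟩

end PetriNet

theorem fires_project_general {P T : Type}
    (N : PetriNet P T) (Q : Set (Set (P ⊕ T)))
    (hQ : ∀ X ∈ Q, PComponent N X)
    (M M' : P → ℕ) (σ : List T) (h : Fires N M σ M') :
    Fires (N.restrict (⋃₀ Q)) (fun p => M p.1)
      (σ.filterMap fun t => if h : Sum.inr t ∈ ⋃₀ Q then some ⟨t, h⟩ else none)
      (fun p => M' p.1) :=
  h.restrict (inr_mem_sUnion_of_pComponent hQ)

/-- Firing sequences project onto the Q-projection: the projected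
sequence is executable in the marked Q-projection and leads to the restricted marking. -/
theorem fires_project {P T : Type} [Fintype P] [Fintype T]
    (N : PetriNet P T) (Q : Set (Set (P ⊕ T))) (hne : Q.Nonempty)
    (hQ : ∀ X ∈ Q, PComponent N X)
    (M M' : P → ℕ) (σ : List T) (h : Fires N M σ M') :
    Fires (N.restrict (⋃₀ Q)) (fun p => M p.1)
      (σ.filterMap fun t => if h : Sum.inr t ∈ ⋃₀ Q then some ⟨t, h⟩ else none)
      (fun p => M' p.1) :=
  fires_project_general N Q hQ M M' σ h
end

section
/- In a live, bounded, cyclic marked free-choice net with initial marking [p_H] (a single token on place p_H), for any reachable marking M' marking a place q and any elementary path ⟨p0,t1,p1,...,tn,pn⟩ with p0=q and pn=p_H, there is a firing sequence from M' back to [p_H] that fires t1,...,tn in the given order, with no intermediate marking marking p_H. -/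
open scoped Classical

open PetriNet

section AuxRealizable

open PetriNet

variable {P T : Type}

private lemma fires_det' {N : PetriNet P T} :
    ∀ {σ : List T} {M M1 M2 : P → ℕ}, Fires N M σ M1 → Fires N M σ M2 → M1 = M2 := by
  intro σ
  induction σ with
  | nil => intro M M1 M2 h1 h2; cases h1; cases h2; rfl
  | cons t σ ih =>
    intro M M1 M2 h1 h2
    cases h1 with
    | cons hen1 hr1 =>
      cases h2 with
      | cons hen2 hr2 => exact ih hr1 hr2

private lemma fires_append' {N : PetriNet P T} :
    ∀ {σ1 : List T} {M M1 M2 : P → ℕ} {σ2 : List T},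
      Fires N M σ1 M1 → Fires N M1 σ2 M2 → Fires N M (σ1 ++ σ2) M2 := by
  intro σ1
  induction σ1 with
  | nil => intro M M1 M2 σ2 h1 h2; cases h1; exact h2
  | cons t σ ih =>
    intro M M1 M2 σ2 h1 h2
    cases h1 with
    | cons hen hr => exact Fires.cons hen (ih hr h2)

private lemma fires_split' {N : PetriNet P T} :
    ∀ {σ1 : List T} {M M2 : P → ℕ} {σ2 : List T},
      Fires N M (σ1 ++ σ2) M2 → ∃ M1, Fires N M σ1 M1 ∧ Fires N M1 σ2 M2 := by
  intro σ1
  induction σ1 with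
  | nil => intro M M2 σ2 h; exact ⟨M, Fires.nil M, h⟩
  | cons t σ ih =>
    intro M M2 σ2 h
    cases h with
    | cons hen hr =>
      obtain ⟨M1, h1, h2⟩ := ih hr
      exact ⟨M1, Fires.cons hen h1, h2⟩

private lemma reach_trans' {N : PetriNet P T} {M M1 M2 : P → ℕ}
    (h1 : Reach N M M1) (h2 : Reach N M1 M2) : Reach N M M2 := by
  obtain ⟨σ1, hσ1⟩ := h1
  obtain ⟨σ2, hσ2⟩ := h2
  exact ⟨σ1 ++ σ2, fires_append' hσ1 hσ2⟩

private lemma fires_mono' {N : PetriNet P T} :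
    ∀ {M M' : P → ℕ} {σ : List T}, Fires N M σ M' → ∀ D : P → ℕ,
      Fires N (fun p => M p + D p) σ (fun p => M' p + D p) := by
  intro M M' σ h
  induction h with
  | nil M => intro D; exact Fires.nil _
  | @cons M M'' t σ hen hrest ih =>
    intro D
    have hen' : N.enabled (fun p => M p + D p) t := fun p hp =>
      le_trans (hen p hp) (Nat.le_add_right _ _)
    have hf : (N.fire (fun p => M p + D p) t) = fun p => N.fire M t p + D p := by
      funext p
      simp only [PetriNet.fire]
      by_cases hp : p ∈ N.pre t
      · have h1 : 1 ≤ M p := hen p hp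
        by_cases hq : p ∈ N.post t <;> simp [hp, hq] <;> omega
      · by_cases hq : p ∈ N.post t <;> simp [hp, hq] <;> omega
    exact Fires.cons hen' (hf ▸ ih D)

/-- Any reachable marking that puts a token on `pH` must equal `[pH]`,
by boundedness (pumping argument). -/
private lemma reach_pH_eq {N : PetriNet P T} {pH : P}
    (hbound : Bounded N (unitMarking pH)) {M : P → ℕ}
    (h : Reach N (unitMarking pH) M) (hm : 1 ≤ M pH) :
    M = unitMarking pH := by
  by_contra hne
  obtain ⟨ρ, hρ⟩ := h
  set D : P → ℕ := fun p => M p - unitMarking pH p with hD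
  have hge : ∀ p, unitMarking pH p ≤ M p := by
    intro p
    by_cases hp : p = pH <;> simp [unitMarking, hp]
    omega
  have hMD : ∀ p, M p = unitMarking pH p + D p := by
    intro p; have := hge p; simp only [hD]; omega
  have key : ∀ k : ℕ, Reach N (unitMarking pH) (fun p => unitMarking pH p + k * D p) := by
    intro k
    induction k with
    | zero =>
      refine ⟨[], ?_⟩
      have : (fun p => unitMarking pH p + 0 * D p) = unitMarking pH := by
        funext p; simp
      rw [this]; exact Fires.nil _
    | succ k ih =>
      refine reach_trans' ih ⟨ρ, ?_⟩
      have := fires_mono' hρ (fun p => k * D p)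
      have heq : (fun p => M p + k * D p) = fun p => unitMarking pH p + (k + 1) * D p := by
        funext p; rw [hMD p]; ring
      rw [heq] at this
      exact this
  obtain ⟨d, hd⟩ : ∃ d, 1 ≤ D d := by
    by_contra hc
    push_neg at hc
    apply hne
    funext p
    have h1 := hc p
    have h2 := hMD p
    omega
  obtain ⟨kb, hkb⟩ := hbound
  have := hkb _ (key (kb + 1)) d
  have : unitMarking pH d + (kb + 1) * D d ≤ kb := this
  nlinarith

private lemma marked_ne_pH {N : PetriNet P T} {pH : P}
    (hbound : Bounded N (unitMarking pH)) {M : P → ℕ} {r : P}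
    (h : Reach N (unitMarking pH) M) (hr : 1 ≤ M r) (hne : r ≠ pH) : M pH = 0 := by
  by_contra h0
  have h1 : 1 ≤ M pH := Nat.one_le_iff_ne_zero.mpr h0
  have h2 := reach_pH_eq hbound h h1
  rw [h2] at hr
  simp [unitMarking, hne] at hr

/-- Free-choice cut lemma: from the existence of a sequence reaching a marking
enabling `t`, extract a sequence avoiding all consumers of `q` after which `t`
is enabled. -/
private lemma fc_cut {N : PetriNet P T} (hfc : FreeChoice N) {q : P} {t : T}
    (hqt : q ∈ N.pre t) :
    ∀ {σ0 : List T} {M M2 : P → ℕ}, Fires N M σ0 M2 → N.enabled M2 t →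
      ∃ σ M1, Fires N M σ M1 ∧ N.enabled M1 t ∧ ∀ u ∈ σ, q ∉ N.pre u := by
  intro σ0
  induction σ0 with
  | nil =>
    intro M M2 h hen; cases h; exact ⟨[], M, Fires.nil _, hen, by simp⟩
  | cons u rest ih =>
    intro M M2 h hen
    cases h with
    | cons henu hrest =>
      by_cases hqu : q ∈ N.pre u
      · rcases hfc u t with heq | hdis
        · refine ⟨[], M, Fires.nil _, fun p hp => henu p ?_, by simp⟩
          rw [heq]; exact hp
        · exfalso
          have : q ∈ N.pre u ∩ N.pre t := ⟨hqu, hqt⟩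
          rw [hdis] at this
          exact this
      · obtain ⟨σ, M1, h1, h2, h3⟩ := ih hrest hen
        refine ⟨u :: σ, M1, Fires.cons henu h1, h2, ?_⟩
        intro v hv
        rcases List.mem_cons.mp hv with rfl | hv
        · exact hqu
        · exact h3 v hv

private lemma fires_keep' {N : PetriNet P T} {q : P} :
    ∀ {M : P → ℕ} {σ : List T} {M' : P → ℕ}, Fires N M σ M' →
      (∀ u ∈ σ, q ∉ N.pre u) → M q ≤ M' q := by
  intro M σ M' h
  induction h with
  | nil => exact fun _ => le_rfl
  | @cons M M'' t σ hen hrest ih =>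
    intro hav
    have h1 : M q ≤ N.fire M t q := by
      have hnq : q ∉ N.pre t := hav t (by simp)
      simp [PetriNet.fire, hnq]
    exact le_trans h1 (ih fun u hu => hav u (by simp [hu]))

private lemma prefix_split' {α : Type*} :
    ∀ {a τ b : List α}, τ <+: a ++ b → τ <+: a ∨ ∃ c, c <+: b ∧ τ = a ++ c := by
  intro a
  induction a with
  | nil => intro τ b h; exact Or.inr ⟨τ, h, rfl⟩
  | cons x a ih =>
    intro τ b h
    cases τ with
    | nil => exact Or.inl (List.nil_prefix)
    | cons y τ =>
      rw [List.cons_append, List.cons_prefix_cons] at h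
      obtain ⟨rfl, h⟩ := h
      rcases ih h with h1 | ⟨c, hc, rfl⟩
      · exact Or.inl (List.cons_prefix_cons.mpr ⟨rfl, h1⟩)
      · exact Or.inr ⟨c, hc, rfl⟩

private lemma realizable_main {N : PetriNet P T} {pH : P} (hfc : FreeChoice N)
    (hlive : Live N (unitMarking pH)) (hbound : Bounded N (unitMarking pH)) :
    ∀ (l : List (T × P)) (q : P) (M : P → ℕ),
      Reach N (unitMarking pH) M → 1 ≤ M q → AltPath N q l →
      (q :: l.map Prod.snd).Nodup →
      (q :: l.map Prod.snd).getLast (by simp) = pH →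
      ∃ σ : List T, Fires N M σ (unitMarking pH) ∧
        (l.map Prod.fst).Sublist σ ∧
        (∀ τ M'', τ <+: σ → τ ≠ [] → τ ≠ σ → Fires N M τ M'' → M'' pH = 0) := by
  intro l
  induction l with
  | nil =>
    intro q M hreach hMq hpath hnodup hlast
    have hq : q = pH := by simpa using hlast
    subst hq
    have hMeq := reach_pH_eq hbound hreach hMq
    refine ⟨[], ?_, by simp, ?_⟩
    · rw [hMeq]; exact Fires.nil _
    · intro τ M'' hpre hne _ _
      exact absurd (List.prefix_nil.mp hpre) hne
  | cons tp l' ih =>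
    obtain ⟨t, p1⟩ := tp
    intro q M hreach hMq hpath hnodup hlast
    cases hpath with
    | cons hqt hp1 hpath' =>
      -- q ≠ pH
      have hlast' : (p1 :: l'.map Prod.snd).getLast (by simp) = pH := by
        rw [← hlast]
        simp only [List.map_cons]
        exact (List.getLast_cons (by simp)).symm
      have hpHmem : pH ∈ p1 :: l'.map Prod.snd := by
        rw [← hlast']; exact List.getLast_mem _
      have hqne : q ≠ pH := by
        intro hqe
        have h1 : q ∉ List.map Prod.snd ((t, p1) :: l') := (List.nodup_cons.mp hnodup).1
        apply h1
        simp only [List.map_cons]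
        rw [hqe]
        exact hpHmem
      -- use liveness and the free-choice cut lemma
      obtain ⟨Mx, ⟨σ0, hσ0⟩, henx⟩ := hlive M hreach t
      obtain ⟨σ1, M1, hfire1, hen1, havoid⟩ := fc_cut hfc hqt hσ0 henx
      set M2 := N.fire M1 t with hM2
      have hfire1t : Fires N M (σ1 ++ [t]) M2 :=
        fires_append' hfire1 (Fires.cons hen1 (Fires.nil _))
      have hreach2 : Reach N (unitMarking pH) M2 :=
        reach_trans' hreach ⟨σ1 ++ [t], hfire1t⟩
      have hM2p1 : 1 ≤ M2 p1 := by
        simp only [hM2, PetriNet.fire]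
        simp [hp1]
      -- prefixes of σ1 keep q marked, hence don't mark pH
      have hpre_σ1 : ∀ τ M'', τ <+: σ1 → Fires N M τ M'' → M'' pH = 0 := by
        intro τ M'' hτ hfτ
        have hq' : 1 ≤ M'' q :=
          le_trans hMq (fires_keep' hfτ fun u hu => havoid u (hτ.sublist.subset hu))
        exact marked_ne_pH hbound (reach_trans' hreach ⟨τ, hfτ⟩) hq' hqne
      by_cases hl' : l' = []
      · -- last step: p1 = pH, so M2 = [pH]
        subst hl'
        have hp1pH : p1 = pH := by simpa using hlast'
        have hM2pH : 1 ≤ M2 pH := hp1pH ▸ hM2p1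
        have hM2eq : M2 = unitMarking pH := reach_pH_eq hbound hreach2 hM2pH
        refine ⟨σ1 ++ [t], hM2eq ▸ hfire1t, ?_, ?_⟩
        · simpa using List.sublist_append_right σ1 [t]
        · intro τ M'' hpre hne hneσ hfτ
          rcases prefix_split' hpre with hτ | ⟨c, hc, rfl⟩
          · exact hpre_σ1 τ M'' hτ hfτ
          · cases c with
            | nil => exact hpre_σ1 _ M'' (by simp) hfτ
            | cons y c' =>
              rw [List.cons_prefix_cons] at hc
              obtain ⟨rfl, hc⟩ := hc
              have : c' = [] := List.prefix_nil.mp hc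
              subst this
              exact absurd rfl hneσ
      · -- p1 ≠ pH, recurse
        have hnodup' : (p1 :: l'.map Prod.snd).Nodup := by
          have h := (List.nodup_cons.mp hnodup).2
          simpa using h
        have hp1ne : p1 ≠ pH := by
          intro hpe
          have hnd : p1 ∉ l'.map Prod.snd := (List.nodup_cons.mp hnodup').1
          have hmem : pH ∈ l'.map Prod.snd := by
            rw [← hlast']
            rw [List.getLast_cons (by simpa using hl')]
            exact List.getLast_mem _
          rw [← hpe] at hmem
          exact hnd hmem
        obtain ⟨σ2, hf2, hsub2, hpre2⟩ := ih p1 M2 hreach2 hM2p1 hpath' hnodup' hlast'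
        refine ⟨σ1 ++ t :: σ2, fires_append' hfire1 (Fires.cons hen1 hf2), ?_, ?_⟩
        · simp only [List.map_cons]
          exact (List.Sublist.cons₂ t hsub2).trans (List.sublist_append_right σ1 (t :: σ2))
        · intro τ M'' hpre hne hneσ hfτ
          rcases prefix_split' hpre with hτ | ⟨c, hc, rfl⟩
          · exact hpre_σ1 τ M'' hτ hfτ
          · cases c with
            | nil => exact hpre_σ1 _ M'' (by simp) hfτ
            | cons y c' =>
              rw [List.cons_prefix_cons] at hc
              obtain ⟨rfl, hc'⟩ := hc
              obtain ⟨Ma, hfa, hfb⟩ := fires_split' hfτ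
              have hMa : Ma = M1 := fires_det' hfa hfire1
              subst hMa
              cases hfb with
              | cons hent hrest =>
                cases c' with
                | nil =>
                  cases hrest
                  exact marked_ne_pH hbound hreach2 hM2p1 hp1ne
                | cons z c'' =>
                  have hc'ne : z :: c'' ≠ σ2 := by
                    intro hce
                    apply hneσ
                    rw [hce]
                  exact hpre2 (z :: c'') M'' hc' (by simp) hc'ne hrest

end AuxRealizable


/-- Realizable paths in cyclic free-choice nets: in a live, bounded,
cyclic free-choice net with initial marking `[p_H]`, any elementary path from a
marked place `q` to `p_H` can be realized by a firing sequence back to `[p_H]`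
firing the path's transitions in order, without marking `p_H` in between. -/
theorem realizable_paths_cyclic {P T : Type} [Fintype P] [Fintype T]
    (N : PetriNet P T) (pH : P) (hfc : FreeChoice N)
    (hlive : Live N (unitMarking pH)) (hbound : Bounded N (unitMarking pH))
    (hcyc : HomeMarking N (unitMarking pH) (unitMarking pH))
    (M' : P → ℕ) (hM' : Reach N (unitMarking pH) M')
    (q : P) (hq : 1 ≤ M' q)
    (l : List (T × P)) (hpath : AltPath N q l)
    (helem : (q :: l.map Prod.snd).Nodup ∧ (l.map Prod.fst).Nodup)
    (hlast : (q :: l.map Prod.snd).getLast (by simp) = pH) :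
    ∃ σ : List T, Fires N M' σ (unitMarking pH) ∧
      (l.map Prod.fst).Sublist σ ∧
      (∀ τ M'', τ <+: σ → τ ≠ [] → τ ≠ σ → Fires N M' τ M'' → M'' pH = 0) := by
  exact realizable_main hfc hlive hbound l q M' hM' hq hpath helem.1 hlast
end

section
/- If two reachable markings M1 and M2 of a locally safe P-coverable marked net enable the same set of transitions E, then M1 and M2 agree on every place belonging to a P-component that contains a transition of E. -/
open scoped Classical

open PetriNet


private lemma tokenCount_single {P T : Type} [Fintype P] {X : Set (P ⊕ T)}
    {M : P → ℕ} {q : P} (hqX : Sum.inl q ∈ X) (hq : 1 ≤ M q)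
    (hb : PetriNet.tokenCount X M ≤ 1) :
    ∀ p, Sum.inl p ∈ X → M p = if p = q then 1 else 0 := by
  classical
  intro p hpX
  set f : P → ℕ := fun r => if Sum.inl r ∈ X then M r else 0 with hf
  have hsum : ∑ r : P, f r ≤ 1 := hb
  have hfq : f q = M q := if_pos hqX
  have hq1 : f q ≤ 1 := le_trans (Finset.single_le_sum (fun i _ => Nat.zero_le (f i)) (Finset.mem_univ q)) hsum
  by_cases hpq : p = q
  · subst hpq
    rw [if_pos rfl]
    omega
  · rw [if_neg hpq]
    have hsub : ({p, q} : Finset P) ⊆ Finset.univ := Finset.subset_univ _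
    have h2 : ∑ r ∈ ({p, q} : Finset P), f r ≤ ∑ r : P, f r :=
      Finset.sum_le_sum_of_subset hsub
    rw [Finset.sum_pair hpq] at h2
    have hfp : f p = M p := if_pos hpX
    omega

/-- If two reachable markings of a locally safe P-coverable marked
net enable the same set of transitions, they agree on every place of every
P-component containing an enabled transition. -/
theorem agree_on_enabled_components {P T : Type} [Fintype P] [Fintype T]
    (N : PetriNet P T) (M : P → ℕ) (hcov : PCover N) (hls : LocallySafe N M)
    (M1 M2 : P → ℕ) (h1 : Reach N M M1) (h2 : Reach N M M2)
    (hE : enabledSet N M1 = enabledSet N M2) :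
    ∀ X, PComponent N X → (∃ t ∈ enabledSet N M1, Sum.inr t ∈ X) →
      ∀ p, Sum.inl p ∈ X → M1 p = M2 p := by
  rintro X hX ⟨t, ht1, htX⟩ p hpX
  obtain ⟨q, ⟨hqpre, hqX⟩, -⟩ := (hX.2.2.1 t htX).1
  have ht2 : N.enabled M2 t := by
    have : t ∈ enabledSet N M2 := hE ▸ ht1
    exact this
  have hq1 : 1 ≤ M1 q := ht1 q hqpre
  have hq2 : 1 ≤ M2 q := ht2 q hqpre
  have hb1 := hls X hX M1 h1
  have hb2 := hls X hX M2 h2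
  rw [tokenCount_single hqX hq1 hb1 p hpX, tokenCount_single hqX hq2 hb2 p hpX]
end
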